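/- arXiv:1103.2202 — 2 statements merged into one kernel-verified Lean document; each statement's English description precedes it below -/
import Mathlib

section
/- For a connected symmetric directed graph G, the polytope P_G is simplicial if and only if the underlying undirected graph of G contains no even cycle. -/
open Finset

/-- `ρ(e) = e_{i} - e_{j}` for an arrow `e = (i,j)`. -/
def rho {V : Type*} [DecidableEq V] (e : V × V) : V → ℝ :=
  fun k => (if k = e.1 then (1 : ℝ) else 0) - (if k = e.2 then (1 : ℝ) else 0)

/-- The polytope `P_G` associated with the arrow set `A` of a directed graph. -/
def polyG {V : Type*} [DecidableEq V] (A : Finset (V × V)) : Set (V → ℝ) :=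
  convexHull ℝ (rho '' (A : Set (V × V)))

/-- Connectivity of the underlying undirected graph of the directed graph with arrow set `A`. -/
def GConnected {V : Type*} [DecidableEq V] (A : Finset (V × V)) : Prop :=
  (SimpleGraph.fromRel (fun i j => (i, j) ∈ A)).Connected

/-- Cyclic successor on `Fin l`. -/
def succAt {l : ℕ} (h : 0 < l) (j : Fin l) : Fin l :=
  ⟨((j : ℕ) + 1) % l, Nat.mod_lt _ h⟩

/-- The data of a cycle in a directed graph on the vertex set `V`:
a list of at least two distinct vertices, cyclically ordered, together with, for each
edge of the cycle, a choice of direction (`ε j = true` means the arrow points forwards). -/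
structure PreCycle (V : Type*) where
  l : ℕ
  two_le : 2 ≤ l
  v : Fin l → V
  ε : Fin l → Bool
  inj : Function.Injective v

namespace PreCycle

variable {V : Type*}

theorem pos (C : PreCycle V) : 0 < C.l :=
  lt_of_lt_of_le Nat.zero_lt_two C.two_le

/-- The cyclically next index. -/
def nxt (C : PreCycle V) (j : Fin C.l) : Fin C.l := succAt C.pos j

/-- The arrow of the cycle corresponding to its `j`-th edge. -/
def arrow (C : PreCycle V) (j : Fin C.l) : V × V :=
  if C.ε j then (C.v j, C.v (C.nxt j)) else (C.v (C.nxt j), C.v j)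

/-- `C` is a cycle in the directed graph with arrow set `A`. -/
def IsCycleIn [DecidableEq V] (C : PreCycle V) (A : Finset (V × V)) : Prop :=
  (∀ j, C.arrow j ∈ A) ∧ Function.Injective C.arrow

/-- A cycle is homogeneous if it has as many forward arrows as backward arrows. -/
def Homogeneous (C : PreCycle V) : Prop :=
  2 * (Finset.univ.filter fun j => C.ε j = true).card = C.l

/-- A directed cycle: all arrows point in the direction of traversal. -/
def IsDirected (C : PreCycle V) : Prop := ∀ j, C.ε j = true

/-- The defining property of the function `μ_C` attached to a homogeneous cycle `C`
(here recorded as a function of the position along the cycle; since the vertices of the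
cycle are distinct this is the same as a function on the cycle vertices):
it is nonnegative, decreases by `1` along forward arrows, increases by `1` along
backward arrows, and has minimum value `0`. -/
def IsMu (C : PreCycle V) (μ : Fin C.l → ℤ) : Prop :=
  (∀ j, 0 ≤ μ j) ∧ (∀ j, μ (C.nxt j) = if C.ε j then μ j - 1 else μ j + 1) ∧ (∃ j, μ j = 0)

end PreCycle

/-- Every arrow of the directed graph with arrow set `A` lies in a directed cycle. -/
def EveryArrowInDirCycle {V : Type*} [DecidableEq V] (A : Finset (V × V)) : Prop :=
  ∀ e ∈ A, ∃ C : PreCycle V, C.IsCycleIn A ∧ C.IsDirected ∧ ∃ j, C.arrow j = e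

/-- The dimension of a subset of `ℝ^V` (the dimension of its affine hull). -/
noncomputable def pdim {V : Type*} (s : Set (V → ℝ)) : ℕ :=
  Module.finrank ℝ (vectorSpan ℝ s)

/-- `F` is a facet of the polytope `P`: a nonempty exposed face of codimension one. -/
def IsFacetOf {V : Type*} (F P : Set (V → ℝ)) : Prop :=
  IsExposed ℝ P F ∧ F.Nonempty ∧ pdim F + 1 = pdim P

/-- A polytope is simplicial if the vertices of every facet are affinely independent. -/
def Simplicial {V : Type*} (P : Set (V → ℝ)) : Prop :=
  ∀ F : Set (V → ℝ), IsFacetOf F P →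
    AffineIndependent ℝ (fun x : (F.extremePoints ℝ) => (x : V → ℝ))

/-- The lattice `ℤ^V ∩ {x : Σ x_i = 0}`, as a subset of `ℝ^V`. -/
def latticeSet (V : Type*) [Fintype V] : Set (V → ℝ) :=
  {x | (∀ i, ∃ z : ℤ, x i = (z : ℝ)) ∧ ∑ i, x i = 0}

/-- The set of integer points of `ℝ^V`. -/
def intLat (V : Type*) : Set (V → ℝ) :=
  {x | ∀ i, ∃ z : ℤ, x i = (z : ℝ)}

/-- `W` is a `ℤ`-basis of (the additive group generated by) `L`. -/
def IsZBasisOf {V : Type*} (W L : Set (V → ℝ)) : Prop :=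
  W ⊆ L ∧ LinearIndependent ℤ (fun x : W => (x : V → ℝ)) ∧
    L ⊆ (Submodule.span ℤ W : Set (V → ℝ))

/-- There is a directed path of length `n` from `i` to `j` in the directed graph `A`. -/
def HasDPath {V : Type*} (A : Finset (V × V)) (i j : V) (n : ℕ) : Prop :=
  ∃ f : Fin (n + 1) → V, f 0 = i ∧ f (Fin.last n) = j ∧
    ∀ k : Fin n, (f k.castSucc, f k.succ) ∈ A

/-- The underlying undirected graph of `A` contains an even cycle. -/
def HasEvenCycle {V : Type*} [DecidableEq V] (A : Finset (V × V)) : Prop :=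
  ∃ C : PreCycle V, 3 ≤ C.l ∧ Even C.l ∧
    ∀ j, (C.v j, C.v (C.nxt j)) ∈ A ∨ (C.v (C.nxt j), C.v j) ∈ A

/-- A subgraph is two-connected if it has at least two vertices and removing any single
vertex leaves it connected. -/
def TwoConn {W : Type*} (G : SimpleGraph W) (H : G.Subgraph) : Prop :=
  2 ≤ H.verts.ncard ∧ ∀ w : W, ((H.deleteVerts {w}).coe).Connected

/-- A two-connected component: a maximal two-connected subgraph. -/
def IsBlock {W : Type*} (G : SimpleGraph W) (H : G.Subgraph) : Prop :=
  TwoConn G H ∧ ∀ H' : G.Subgraph, TwoConn G H' → H ≤ H' → H' = H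

/-- The subgraph consists of a single edge. -/
def IsSingleEdge {W : Type*} (G : SimpleGraph W) (H : G.Subgraph) : Prop :=
  ∃ (a b : W) (h : G.Adj a b), H = G.subgraphOfAdj h

/-- The subgraph is an odd cycle. -/
def IsOddCycleSub {W : Type*} (G : SimpleGraph W) (H : G.Subgraph) : Prop :=
  ∃ (l : ℕ) (hl : 3 ≤ l) (v : Fin l → W), Odd l ∧ Function.Injective v ∧
    H.verts = Set.range v ∧
    ∀ x y : W, H.Adj x y ↔ ∃ j : Fin l,
      (x = v j ∧ y = v (succAt (by omega) j)) ∨ (y = v j ∧ x = v (succAt (by omega) j))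

/-- The simple graph `G` contains no cycle of even length. -/
def NoEvenCycleSG {W : Type*} (G : SimpleGraph W) : Prop :=
  ¬ ∃ (u : W) (w : G.Walk u u), w.IsCycle ∧ Even w.length

/-!
A facet of `P_G` is cut out by a potential `f : V → ℝ`, and its vertices are the `ρ(e)` for the
arrows `e = (i, j)` with `f i - f j = m`, the maximal value, which is positive. In a nontrivial
linear relation among such vertices every endpoint of an arrow of the support lies on a second
arrow of the support, so the support contains a cycle; as `f` changes by `± m` along each of its
edges, that cycle is even.

Conversely, given an even cycle, let `δ` be the distance to its even-indexed vertices. The arrows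
along which `δ` drops by one form a connected spanning graph, so `δ` cuts out a facet; it contains
the edges of the cycle oriented from odd to even, whose alternating sum vanishes.
-/

section Rho

variable {V : Type*} [DecidableEq V]

lemma rho_eq_single_sub_single (e : V × V) : rho e = Pi.single e.1 1 - Pi.single e.2 1 := by
  ext k
  simp [rho, Pi.single_apply]

lemma rho_swap (e : V × V) : rho e.swap = -rho e := by
  ext k
  simp [rho]

lemma rho_self (i : V) : rho (i, i) = 0 := by
  ext k
  simp [rho]

lemma rho_trans (a b c : V) : rho (a, c) = rho (a, b) + rho (b, c) := by
  ext k
  simp only [rho, Pi.add_apply]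
  ring

lemma rho_apply_sub_rho_apply_le_two (e : V × V) (a b : V) : rho e a - rho e b ≤ 2 := by
  unfold rho
  split_ifs <;> norm_num

lemma eq_of_rho_apply_sub_rho_apply_eq_two {e : V × V} {a b : V} (h : rho e a - rho e b = 2) :
    (a, b) = e := by
  unfold rho at h
  split_ifs at h <;> first | (norm_num at h; done) | ext <;> assumption

lemma map_rho {F : Type*} [FunLike F (V → ℝ) ℝ] [AddMonoidHomClass F (V → ℝ) ℝ]
    (ℓ : F) (e : V × V) : ℓ (rho e) = ℓ (Pi.single e.1 1) - ℓ (Pi.single e.2 1) := by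
  rw [rho_eq_single_sub_single, map_sub]

lemma rho_injOn : {e : V × V | e.1 ≠ e.2}.InjOn rho := by
  intro e (he : e.1 ≠ e.2) e' _ h
  refine eq_of_rho_apply_sub_rho_apply_eq_two ?_
  rw [← h]
  simp [rho, he, Ne.symm he]
  norm_num

variable [Fintype V]

noncomputable def potentialFunctional (f : V → ℝ) : (V → ℝ) →L[ℝ] ℝ :=
  LinearMap.toContinuousLinearMap (Fintype.linearCombination ℝ f)

lemma potentialFunctional_single (f : V → ℝ) (i : V) :
    potentialFunctional f (Pi.single i 1) = f i := by
  simp [potentialFunctional]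

lemma potentialFunctional_rho (f : V → ℝ) (e : V × V) :
    potentialFunctional f (rho e) = f e.1 - f e.2 := by
  rw [map_rho, potentialFunctional_single, potentialFunctional_single]

end Rho

section ConvexHull

variable {E : Type*} [AddCommGroup E] [Module ℝ E]

lemma apply_le_of_mem_convexHull {s : Set E} (ℓ : E →ₗ[ℝ] ℝ) {c : ℝ}
    (hs : ∀ y ∈ s, ℓ y ≤ c) {x : E} (hx : x ∈ convexHull ℝ s) : ℓ x ≤ c :=
  convexHull_min hs (convex_halfSpace_le ℓ.isLinear c) hx

lemma mem_convexHull_sep_of_apply_eq {s : Set E} (ℓ : E →ₗ[ℝ] ℝ) {c : ℝ}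
    (hs : ∀ y ∈ s, ℓ y ≤ c) {x : E} (hx : x ∈ convexHull ℝ s) (hxc : ℓ x = c) :
    x ∈ convexHull ℝ {y ∈ s | ℓ y = c} := by
  classical
  obtain ⟨ι, t, w, z, hw₀, hw₁, hz, rfl⟩ := (convexHull_eq s).subset hx
  have hslack : ∑ i ∈ t, w i * (c - ℓ (z i)) = 0 := by
    have hℓ : ℓ (t.centerMass w z) = ∑ i ∈ t, w i * ℓ (z i) := by
      simp [Finset.centerMass, hw₁, map_sum]
    rw [← hxc, hℓ]
    simp only [mul_sub, Finset.sum_sub_distrib, ← Finset.sum_mul, hw₁, one_mul, sub_self]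
  have htight : ∀ i ∈ t, w i ≠ 0 → ℓ (z i) = c := by
    intro i hi hwi
    have hterm := (Finset.sum_eq_zero_iff_of_nonneg fun j hj =>
      mul_nonneg (hw₀ j hj) (sub_nonneg.2 (hs _ (hz j hj)))).1 hslack i hi
    linarith [(mul_eq_zero.1 hterm).resolve_left hwi]
  rw [← Finset.centerMass_filter_ne_zero]
  refine Finset.centerMass_mem_convexHull _ (fun i hi => hw₀ i (Finset.mem_filter.1 hi).1)
    (by rw [Finset.sum_filter_ne_zero, hw₁]; exact one_pos) fun i hi => ?_
  obtain ⟨hit, hwi⟩ := Finset.mem_filter.1 hi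
  exact ⟨hz i hit, htight i hit hwi⟩

lemma finrank_span_le_finrank_vectorSpan_add_one (s : Set E) :
    Module.finrank ℝ (Submodule.span ℝ s) ≤ Module.finrank ℝ (vectorSpan ℝ s) + 1 := by
  have h : vectorSpan ℝ (insert 0 s) = Submodule.span ℝ s := by
    rw [vectorSpan_eq_span_vsub_set_right ℝ (Set.mem_insert 0 s)]
    simp [Submodule.span_insert_zero]
  rw [← h]
  exact finrank_vectorSpan_insert_le_set ℝ s 0

lemma vectorSpan_convexHull (s : Set E) :
    vectorSpan ℝ (convexHull ℝ s) = vectorSpan ℝ s := by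
  rw [← direction_affineSpan, affineSpan_convexHull, direction_affineSpan]

lemma isExposed_setOf_apply_eq [TopologicalSpace E] {P : Set E} (ℓ : E →L[ℝ] ℝ) {c : ℝ}
    (hle : ∀ y ∈ P, ℓ y ≤ c) :
    IsExposed ℝ P {x ∈ P | ℓ x = c} := by
  rintro ⟨x₀, hx₀, hx₀c⟩
  refine ⟨ℓ, Set.ext fun x => and_congr_right fun hx => ⟨fun hxc y hy => hxc ▸ hle y hy,
    fun hmax => le_antisymm (hle x hx) (hx₀c ▸ hmax x₀ hx₀)⟩⟩

end ConvexHull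

section Polytope

variable {V : Type*} [DecidableEq V]

lemma rho_mem_polyG {A : Finset (V × V)} {e : V × V} (he : e ∈ A) : rho e ∈ polyG A :=
  subset_convexHull ℝ _ ⟨e, he, rfl⟩

variable [Fintype V]

lemma rho_mem_extremePoints_polyG {A : Finset (V × V)} {e : V × V} (he : e ∈ A)
    (hne : e.1 ≠ e.2) : rho e ∈ (polyG A).extremePoints ℝ := by
  set ℓ := potentialFunctional (rho e)
  have hle : ∀ y ∈ rho '' (A : Set (V × V)), ℓ y ≤ 2 := by
    rintro _ ⟨e', -, rfl⟩
    rw [potentialFunctional_rho]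
    exact rho_apply_sub_rho_apply_le_two ..
  have hmax : ℓ (rho e) = 2 := by
    rw [potentialFunctional_rho]
    simp [rho, hne, hne.symm]
    norm_num
  have hface : {y ∈ rho '' (A : Set (V × V)) | ℓ y = 2} ⊆ {rho e} := by
    rintro _ ⟨⟨e', -, rfl⟩, h2⟩
    rw [potentialFunctional_rho] at h2
    rw [Set.mem_singleton_iff, ← eq_of_rho_apply_sub_rho_apply_eq_two h2]
  refine exposedPoints_subset_extremePoints
    ⟨rho_mem_polyG he, ℓ, fun y hy => ⟨?_, fun hy2 => ?_⟩⟩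
  · exact hmax ▸ apply_le_of_mem_convexHull ℓ.toLinearMap hle hy
  · have hy2' : ℓ y = 2 :=
      le_antisymm (apply_le_of_mem_convexHull ℓ.toLinearMap hle hy) (hmax ▸ hy2)
    simpa using convexHull_mono hface (mem_convexHull_sep_of_apply_eq ℓ.toLinearMap hle hy hy2')

end Polytope

abbrev arrowGraph {V : Type*} (A : Finset (V × V)) : SimpleGraph V :=
  SimpleGraph.fromRel fun i j => (i, j) ∈ A

lemma mem_of_adj_arrowGraph {V : Type*} {A : Finset (V × V)}
    (hsym : ∀ i j, (i, j) ∈ A → (j, i) ∈ A) {a b : V} (h : (arrowGraph A).Adj a b) :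
    (a, b) ∈ A :=
  h.2.elim id (hsym b a)

section Dimension

variable {V : Type*} [DecidableEq V]

lemma rho_mem_span_of_reachable {T : Finset (V × V)} {u v : V}
    (h : (arrowGraph T).Reachable u v) :
    rho (u, v) ∈ Submodule.span ℝ (rho '' (T : Set (V × V))) := by
  obtain ⟨p⟩ := h
  induction p with
  | nil => simp [rho_self]
  | @cons a b c hab p ih =>
    rw [rho_trans a b c]
    refine add_mem ?_ ih
    rcases hab.2 with h | h
    · exact Submodule.subset_span ⟨_, h, rfl⟩
    · rw [show rho (a, b) = -rho (b, a) from rho_swap (b, a)]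
      exact neg_mem (Submodule.subset_span ⟨_, h, rfl⟩)

variable [Fintype V]

lemma card_sub_one_le_finrank_span_rho {T : Finset (V × V)} (hT : (arrowGraph T).Connected) :
    Fintype.card V - 1 ≤ Module.finrank ℝ (Submodule.span ℝ (rho '' (T : Set (V × V)))) := by
  obtain ⟨b⟩ := hT.nonempty
  have htop : Submodule.span ℝ (rho '' (T : Set (V × V))) ⊔
      Submodule.span ℝ {Pi.single b 1} = ⊤ := by
    rw [eq_top_iff, ← (Pi.basisFun ℝ V).span_eq, Submodule.span_le]
    rintro _ ⟨i, rfl⟩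
    rw [Pi.basisFun_apply, show Pi.single i (1 : ℝ) = rho (i, b) + Pi.single b 1 by
      rw [rho_eq_single_sub_single]; abel]
    exact add_mem (Submodule.mem_sup_left (rho_mem_span_of_reachable (hT.preconnected i b)))
      (Submodule.mem_sup_right (Submodule.mem_span_singleton_self _))
  have hsup := Submodule.finrank_add_le_finrank_add_finrank
    (Submodule.span ℝ (rho '' (T : Set (V × V)))) (Submodule.span ℝ {Pi.single b (1 : ℝ)})
  rw [htop, finrank_top, Module.finrank_fintype_fun_eq_card] at hsup
  have hline : Module.finrank ℝ (ℝ ∙ (Pi.single b 1 : V → ℝ)) = 1 :=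
    finrank_span_singleton (by simp)
  omega

lemma pdim_polyG_lt_card [Nonempty V] (A : Finset (V × V)) :
    pdim (polyG A) < Fintype.card V := by
  obtain ⟨i⟩ := ‹Nonempty V›
  set σ : (V → ℝ) →ₗ[ℝ] ℝ := (potentialFunctional fun _ : V => (1 : ℝ)).toLinearMap
  have hker : vectorSpan ℝ (polyG A) ≤ LinearMap.ker σ := by
    rw [polyG, vectorSpan_convexHull, vectorSpan_def, Submodule.span_le]
    rintro _ ⟨_, ⟨e, -, rfl⟩, _, ⟨e', -, rfl⟩, rfl⟩
    simp [σ, potentialFunctional_rho]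
  have hne : LinearMap.ker σ ≠ ⊤ := fun h => by
    have hi : σ (Pi.single i 1) = 0 := LinearMap.mem_ker.1 (h ▸ Submodule.mem_top)
    simp [σ, potentialFunctional_single] at hi
  rw [← Module.finrank_fintype_fun_eq_card (R := ℝ)]
  exact (Submodule.finrank_mono hker).trans_lt (Submodule.finrank_lt hne)

end Dimension

section Facet

variable {V : Type*} [Fintype V] [DecidableEq V]

lemma isFacetOf_polyG_of_tight {A T : Finset (V × V)}
    (hsym : ∀ i j, (i, j) ∈ A → (j, i) ∈ A) (ℓ : (V → ℝ) →L[ℝ] ℝ)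
    (hle : ∀ e ∈ A, ℓ (rho e) ≤ 1) (hTA : T ⊆ A)
    (htight : ∀ e ∈ T, ℓ (rho e) = 1) (hT : (arrowGraph T).Connected) (hT₀ : T.Nonempty) :
    IsFacetOf {x ∈ polyG A | ℓ x = 1} (polyG A) := by
  set F := {x ∈ polyG A | ℓ x = 1}
  have hleP : ∀ y ∈ polyG A, ℓ y ≤ 1 := fun y hy =>
    apply_le_of_mem_convexHull ℓ.toLinearMap (by rintro _ ⟨e, he, rfl⟩; exact hle e he) hy
  have hTF : rho '' (T : Set (V × V)) ⊆ F := by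
    rintro _ ⟨e, he, rfl⟩
    exact ⟨rho_mem_polyG (hTA he), htight e he⟩
  obtain ⟨e₀, he₀⟩ := hT₀
  -- the tight vectors `ρ e`, `e ∈ T`, lie in `F` and span a space of dimension `|V| - 1`
  have hlower : Fintype.card V - 1 ≤ pdim F + 1 :=
    (card_sub_one_le_finrank_span_rho hT).trans <|
      (finrank_span_le_finrank_vectorSpan_add_one _).trans <|
        Nat.add_le_add_right (Submodule.finrank_mono (vectorSpan_mono ℝ hTF)) 1
  -- `ℓ` vanishes on `vectorSpan ℝ F` but not at `ρ e₀ - ρ e₀.swap = 2 ρ e₀`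
  have hlt : vectorSpan ℝ F < vectorSpan ℝ (polyG A) := by
    refine SetLike.lt_iff_le_and_exists.2 ⟨vectorSpan_mono ℝ (Set.sep_subset _ _),
      rho e₀ -ᵥ rho e₀.swap, vsub_mem_vectorSpan ℝ (rho_mem_polyG (hTA he₀))
        (rho_mem_polyG (hsym _ _ (hTA he₀))), fun hmem => ?_⟩
    have hker : vectorSpan ℝ F ≤ LinearMap.ker ℓ.toLinearMap := by
      rw [vectorSpan_def, Submodule.span_le]
      rintro _ ⟨x, hx, y, hy, rfl⟩
      simp [hx.2, hy.2]
    have h0 := LinearMap.mem_ker.1 (hker hmem)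
    simp [rho_swap, htight e₀ he₀] at h0
  have : Nonempty V := hT.nonempty
  refine ⟨isExposed_setOf_apply_eq ℓ hleP, ⟨rho e₀, hTF ⟨e₀, he₀, rfl⟩⟩, ?_⟩
  have hF := Submodule.finrank_lt_finrank_of_lt hlt
  have hP := pdim_polyG_lt_card A
  unfold pdim at *
  omega

end Facet

lemma SimpleGraph.cycleGraph_adj_succAt {n : ℕ} (hn : 2 ≤ n) (j : Fin n) :
    (SimpleGraph.cycleGraph n).Adj j (succAt (by omega) j) := by
  refine SimpleGraph.cycleGraph_adj'.2 (Or.inr ?_)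
  rw [Fin.val_sub]
  change (n - j + ((j : ℕ) + 1) % n) % n = 1
  rcases Nat.lt_or_ge ((j : ℕ) + 1) n with h | h
  · rw [Nat.mod_eq_of_lt h, show n - j + (j + 1) = 1 + n by omega, Nat.add_mod_right,
      Nat.mod_eq_of_lt (by omega)]
  · rw [show (j : ℕ) + 1 = n by omega, Nat.mod_self, Nat.add_zero, Nat.mod_eq_of_lt (by omega)]
    omega

namespace PreCycle

variable {V : Type*}

lemma val_nxt (C : PreCycle V) (j : Fin C.l) :
    (C.nxt j : ℕ) = if (j : ℕ) + 1 = C.l then 0 else (j : ℕ) + 1 := by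
  change ((j : ℕ) + 1) % C.l = _
  split_ifs with h
  · rw [h, Nat.mod_self]
  · exact Nat.mod_eq_of_lt (by omega)

lemma nxt_injective (C : PreCycle V) : Function.Injective C.nxt := by
  intro a b h
  have hv := congrArg Fin.val h
  rw [val_nxt, val_nxt] at hv
  ext
  split_ifs at hv <;> omega

lemma nxt_ne (C : PreCycle V) (j : Fin C.l) : C.nxt j ≠ j := by
  intro h
  have hv := congrArg Fin.val h
  rw [val_nxt] at hv
  have := C.two_le
  split_ifs at hv <;> omega

lemma nxt_nxt_ne (C : PreCycle V) (hl : 3 ≤ C.l) (j : Fin C.l) : C.nxt (C.nxt j) ≠ j := by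
  intro h
  have hv := congrArg Fin.val h
  have hj := (C.nxt j).isLt
  rw [val_nxt, val_nxt] at hv
  rw [val_nxt] at hj
  split_ifs at hv hj <;> omega

lemma even_nxt_iff (C : PreCycle V) (hl : Even C.l) (j : Fin C.l) :
    Even (C.nxt j : ℕ) ↔ ¬Even (j : ℕ) := by
  obtain ⟨m, hm⟩ := hl
  rw [val_nxt]
  split_ifs <;> rw [Nat.even_iff, Nat.even_iff] <;> omega

lemma eq_of_sym2_eq (C : PreCycle V) (hl : 3 ≤ C.l) {a b : Fin C.l}
    (h : s(C.v a, C.v (C.nxt a)) = s(C.v b, C.v (C.nxt b))) : a = b := by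
  rcases Sym2.eq_iff.1 h with ⟨h₁, -⟩ | ⟨h₁, h₂⟩
  · exact C.inj h₁
  · obtain rfl := C.inj h₁
    exact absurd (C.inj h₂) (C.nxt_nxt_ne hl b)

lemma reachable_of_adj {G : SimpleGraph V} (C : PreCycle V)
    (h : ∀ j, G.Adj (C.v j) (C.v (C.nxt j))) (j k : Fin C.l) : G.Reachable (C.v j) (C.v k) := by
  suffices ∀ k : Fin C.l, G.Reachable (C.v ⟨0, C.pos⟩) (C.v k) from
    (this j).symm.trans (this k)
  rintro ⟨k, hk⟩
  induction k with
  | zero => rfl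
  | succ n ih =>
    have hnxt : C.nxt ⟨n, by omega⟩ = ⟨n + 1, hk⟩ := by
      ext
      rw [val_nxt]
      dsimp only
      split_ifs <;> omega
    exact (ih (by omega)).trans (hnxt ▸ (h _).reachable)

lemma even_l_of_potential (C : PreCycle V) (f : V → ℝ) {m : ℝ} (hm : m ≠ 0)
    (h : ∀ j, f (C.v j) - f (C.v (C.nxt j)) = m ∨ f (C.v j) - f (C.v (C.nxt j)) = -m) :
    Even C.l := by
  classical
  set σ : Fin C.l → ℤ := fun j => if f (C.v j) - f (C.v (C.nxt j)) = m then 1 else -1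
  have hstep : ∀ j, f (C.v j) - f (C.v (C.nxt j)) = σ j * m := by
    intro j
    rcases h j with h | h
    · simp [σ, h]
    · have : -m ≠ m := fun h' => hm (by linarith)
      simp [σ, h, this]
  have hσ : ∑ j, σ j = 0 := by
    have hsum : (∑ j, (σ j : ℝ)) * m = 0 := by
      simp_rw [Finset.sum_mul, ← hstep, Finset.sum_sub_distrib,
        C.nxt_injective.bijective_of_finite.sum_comp (fun j => f (C.v j)), sub_self]
    exact_mod_cast (mul_eq_zero.1 hsum).resolve_right hm
  have hl : (C.l : ℤ) = ∑ j, (1 + σ j) := by simp [Finset.sum_add_distrib, hσ]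
  -- each `1 + σ j` is `0` or `2`
  have heven : Even (∑ j, (1 + σ j)) :=
    Finset.even_sum _ fun j _ => by
      by_cases hj : f (C.v j) - f (C.v (C.nxt j)) = m <;> simp [σ, hj]
  rw [← hl] at heven
  exact_mod_cast heven

def ofCopy {G : SimpleGraph V} {n : ℕ} (hn : 2 ≤ n) (φ : (SimpleGraph.cycleGraph n).Copy G) :
    PreCycle V :=
  ⟨n, hn, φ, fun _ => true, φ.injective⟩ -- the orientations `ε` are arbitrary

lemma exists_of_not_isAcyclic {G : SimpleGraph V} (h : ¬G.IsAcyclic) :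
    ∃ C : PreCycle V, 3 ≤ C.l ∧ ∀ j, G.Adj (C.v j) (C.v (C.nxt j)) := by
  rw [SimpleGraph.isAcyclic_iff_free_cycleGraph] at h
  push Not at h
  obtain ⟨n, hn, ⟨φ⟩⟩ := h
  exact ⟨ofCopy (by omega) φ, hn, fun j =>
    φ.toHom.map_adj (SimpleGraph.cycleGraph_adj_succAt (n := n) (by omega) j)⟩

end PreCycle

namespace SimpleGraph

variable {V : Type*} {G : SimpleGraph V}

lemma not_isAcyclic_of_forall_exists_adj_ne [Finite V] {a b : V} (hab : G.Adj a b)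
    (h : ∀ u v, G.Adj u v → ∃ w, G.Adj u w ∧ w ≠ v) : ¬G.IsAcyclic := by
  intro hG
  have : Nonempty V := ⟨a⟩
  obtain ⟨u, v, p, hp, hmax⟩ := Walk.exists_isPath_forall_isPath_length_le_length G
  have hnil : ¬p.Nil := fun hnil => by
    have := hmax a b (Walk.cons hab Walk.nil) (by simp [hab.ne])
    simp [hnil.length_eq_zero] at this
  obtain ⟨w, huw, hw⟩ := h u p.snd (p.adj_snd hnil)
  by_cases hws : w ∈ p.support
  · exact hw (hG.eq_snd_of_adj_start hp huw hws)
  · have := hmax w v (Walk.cons huw.symm p) (hp.cons hws)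
    simp at this

variable (G) {S : Finset V} (hS : S.Nonempty)

noncomputable def distToFinset (i : V) : ℕ := S.inf' hS (G.dist i)

lemma distToFinset_le (i : V) {s : V} (hs : s ∈ S) : G.distToFinset hS i ≤ G.dist i s :=
  Finset.inf'_le _ hs

lemma exists_distToFinset_eq (i : V) : ∃ s ∈ S, G.distToFinset hS i = G.dist i s :=
  Finset.exists_mem_eq_inf' hS _

variable {G hS}

namespace Connected

lemma distToFinset_eq_zero_iff (hG : G.Connected) {i : V} :
    G.distToFinset hS i = 0 ↔ i ∈ S := by
  refine ⟨fun h => ?_, fun h => Nat.le_zero.1 (by simpa using G.distToFinset_le hS i h)⟩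
  obtain ⟨s, hs, hi⟩ := G.exists_distToFinset_eq hS i
  rwa [hG.dist_eq_zero_iff.1 (hi.symm.trans h)]

lemma distToFinset_le_add_one (hG : G.Connected) {i j : V} (h : G.Adj i j) :
    G.distToFinset hS i ≤ G.distToFinset hS j + 1 := by
  obtain ⟨s, hs, hj⟩ := G.exists_distToFinset_eq hS j
  have := hG.dist_triangle (u := i) (v := j) (w := s)
  rw [dist_eq_one_iff_adj.2 h] at this
  have := G.distToFinset_le hS i hs
  omega

lemma exists_adj_distToFinset_add_one (hG : G.Connected) {i : V}
    (h : G.distToFinset hS i ≠ 0) :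
    ∃ j, G.Adj i j ∧ G.distToFinset hS j + 1 = G.distToFinset hS i := by
  obtain ⟨s, hs, hi⟩ := G.exists_distToFinset_eq hS i
  obtain ⟨p, hp⟩ := (hG.preconnected i s).exists_walk_length_eq_dist
  cases p with
  | nil => exact absurd (hi.trans dist_self) h
  | @cons _ j _ hij q =>
    have := (G.distToFinset_le hS j hs).trans (dist_le q)
    have := distToFinset_le_add_one (hS := hS) hG hij
    simp only [Walk.length_cons] at hp
    exact ⟨j, hij, by omega⟩

lemma exists_mem_reachable_of_descent (hG : G.Connected) {H : SimpleGraph V}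
    (hH : ∀ i j, G.Adj i j → G.distToFinset hS j + 1 = G.distToFinset hS i → H.Adj i j)
    (i : V) : ∃ s ∈ S, H.Reachable i s := by
  induction h : G.distToFinset hS i using Nat.strong_induction_on generalizing i with
  | _ n ih =>
    by_cases hn : n = 0
    · exact ⟨i, (distToFinset_eq_zero_iff hG).1 (h.trans hn), Reachable.rfl⟩
    obtain ⟨j, hij, hj⟩ := exists_adj_distToFinset_add_one hG (h ▸ hn)
    obtain ⟨s, hs, hjs⟩ := ih _ (by omega) j rfl
    exact ⟨s, hs, (hH i j hij hj).reachable.trans hjs⟩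

end Connected

end SimpleGraph

section NoEvenCycle

variable {V : Type*} [DecidableEq V]

lemma HasEvenCycle.mono {A B : Finset (V × V)} (h : HasEvenCycle B) (hBA : B ⊆ A) :
    HasEvenCycle A := by
  obtain ⟨C, hl, heven, hC⟩ := h
  exact ⟨C, hl, heven, fun j => (hC j).imp (@hBA _) (@hBA _)⟩

lemma hasEvenCycle_of_not_isAcyclic {A : Finset (V × V)} {H : SimpleGraph V}
    (hHA : H ≤ arrowGraph A) (f : V → ℝ) {m : ℝ} (hm : m ≠ 0)
    (hf : ∀ a b, H.Adj a b → f a - f b = m ∨ f a - f b = -m) (hH : ¬H.IsAcyclic) :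
    HasEvenCycle A := by
  obtain ⟨C, hl, hadj⟩ := PreCycle.exists_of_not_isAcyclic hH
  exact ⟨C, hl, C.even_l_of_potential f hm fun j => hf _ _ (hadj j), fun j => (hHA (hadj j)).2⟩

lemma exists_eq_of_rho_apply_ne_zero {e : V × V} {u : V} (h : rho e u ≠ 0) :
    ∃ w, w ≠ u ∧ (e = (u, w) ∨ e = (w, u)) := by
  obtain ⟨a, b⟩ := e
  by_cases ha : u = a
  · subst ha
    exact ⟨b, fun hb => h (by simp [rho, hb]), Or.inl rfl⟩
  by_cases hb : u = b
  · subst hb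
    exact ⟨a, fun h' => ha h'.symm, Or.inr rfl⟩
  exact absurd (by simp [rho, ha, hb]) h

/-- The `u`-coordinate of the relation has to cancel. -/
lemma exists_adj_ne_of_sum_smul_rho_eq_zero {D : Finset (V × V)} {c : V × V → ℝ}
    (hc : ∀ e ∈ D, c e ≠ 0) (hsum : ∑ e ∈ D, c e • rho e = 0)
    (hswap : ∀ e ∈ D, e.swap ∉ D)
    {u v : V} (huv : (arrowGraph D).Adj u v) : ∃ w, (arrowGraph D).Adj u w ∧ w ≠ v := by
  obtain ⟨hne, hD⟩ := huv
  obtain ⟨e₀, he₀, he₀uv⟩ : ∃ e₀ ∈ D, e₀ = (u, v) ∨ e₀ = (v, u) := by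
    rcases hD with h | h
    exacts [⟨_, h, Or.inl rfl⟩, ⟨_, h, Or.inr rfl⟩]
  have hcoord : ∑ e ∈ D, c e * rho e u = 0 := by
    simpa using congrFun hsum u
  obtain ⟨e, heD, hee₀, he⟩ : ∃ e ∈ D, e ≠ e₀ ∧ c e * rho e u ≠ 0 := by
    by_contra! hzero
    rw [Finset.sum_eq_single_of_mem e₀ he₀ hzero] at hcoord
    refine hc e₀ he₀ ((mul_eq_zero.1 hcoord).resolve_right ?_)
    rcases he₀uv with rfl | rfl <;> simp [rho, hne]
  obtain ⟨w, hwu, hew⟩ := exists_eq_of_rho_apply_ne_zero (right_ne_zero_of_mul he)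
  refine ⟨w, ⟨hwu.symm, ?_⟩, fun hwv => ?_⟩
  · rcases hew with rfl | rfl
    exacts [Or.inl heD, Or.inr heD]
  · subst hwv
    rcases hew with rfl | rfl <;> rcases he₀uv with rfl | rfl
    exacts [hee₀ rfl, hswap _ he₀ heD, hswap _ he₀ heD, hee₀ rfl]

variable [Fintype V]

theorem linearIndepOn_rho (f : V → ℝ) {m : ℝ} (hm : 0 < m) {B : Finset (V × V)}
    (hB : ∀ e ∈ B, f e.1 - f e.2 = m) (hcyc : ¬HasEvenCycle B) :
    LinearIndepOn ℝ rho (B : Set (V × V)) := by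
  by_contra hdep
  obtain ⟨l, hlB, hsum, hl⟩ := linearDepOn_iff.1 hdep
  have hDB : l.support ⊆ B := fun e he => hlB he
  have hswap : ∀ e ∈ l.support, e.swap ∉ l.support := fun e he he' => by
    have h₁ := hB e (hDB he)
    have h₂ := hB _ (hDB he')
    simp only [Prod.fst_swap, Prod.snd_swap] at h₂
    linarith
  obtain ⟨e₀, he₀⟩ := Finsupp.support_nonempty_iff.2 hl
  have hadj₀ : (arrowGraph l.support).Adj e₀.1 e₀.2 :=
    ⟨fun h => hm.ne (by rw [← hB e₀ (hDB he₀), h, sub_self]), Or.inl he₀⟩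
  refine hcyc (hasEvenCycle_of_not_isAcyclic (H := arrowGraph l.support) ?_ f hm.ne' ?_ ?_)
  · exact fun a b ⟨hab, h⟩ => ⟨hab, h.imp (@hDB _) (@hDB _)⟩
  · rintro a b ⟨-, h | h⟩
    · exact Or.inl (hB _ (hDB h))
    · exact Or.inr (by linarith [hB _ (hDB h)])
  · exact SimpleGraph.not_isAcyclic_of_forall_exists_adj_ne hadj₀ fun u v huv =>
      exists_adj_ne_of_sum_smul_rho_eq_zero (fun e he => Finsupp.mem_support_iff.1 he) hsum
        hswap huv

end NoEvenCycle

section Simplicial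

variable {V : Type*} [DecidableEq V]

lemma pos_of_isFacetOf_polyG {A : Finset (V × V)} (hsym : ∀ i j, (i, j) ∈ A → (j, i) ∈ A)
    {ℓ : (V → ℝ) →L[ℝ] ℝ} {x₀ : V → ℝ} (hx₀ : x₀ ∈ ℓ.toExposed (polyG A))
    (hfacet : IsFacetOf (ℓ.toExposed (polyG A)) (polyG A)) : 0 < ℓ x₀ := by
  by_contra! hm
  -- `ℓ (ρ e) = -ℓ (ρ e.swap) ≥ -ℓ x₀ ≥ ℓ x₀`, so `ℓ` is maximal everywhere on `P` and `F = P`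
  have hge : ∀ y ∈ polyG A, ℓ x₀ ≤ ℓ y := by
    intro y hy
    suffices (-ℓ : (V → ℝ) →L[ℝ] ℝ) y ≤ -ℓ x₀ by simpa using this
    refine apply_le_of_mem_convexHull (-ℓ).toLinearMap ?_ hy
    rintro _ ⟨e, he, rfl⟩
    have := hx₀.2 _ (rho_mem_polyG (hsym _ _ he))
    rw [show rho (e.2, e.1) = -rho e from rho_swap e, map_neg] at this
    simp only [ContinuousLinearMap.toLinearMap_neg, LinearMap.neg_apply,
      ContinuousLinearMap.coe_coe]
    linarith
  have hFP : ℓ.toExposed (polyG A) = polyG A :=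
    Set.sep_eq_self_iff_mem_true.2 fun x hx y hy => (hx₀.2 y hy).trans (hge x hx)
  have := hfacet.2.2
  rw [hFP] at this
  omega

variable [Fintype V]

theorem simplicial_polyG_of_not_hasEvenCycle {A : Finset (V × V)}
    (hsym : ∀ i j, (i, j) ∈ A → (j, i) ∈ A) (hcyc : ¬HasEvenCycle A) :
    Simplicial (polyG A) := by
  intro F hfacet
  obtain ⟨x₀, hx₀⟩ := hfacet.2.1
  obtain ⟨ℓ, rfl⟩ := hfacet.1 ⟨x₀, hx₀⟩
  set f : V → ℝ := fun i => ℓ (Pi.single i 1)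
  set B := A.filter fun e => f e.1 - f e.2 = ℓ x₀
  have hB : ∀ e ∈ B, f e.1 - f e.2 = ℓ x₀ := fun e he => (Finset.mem_filter.1 he).2
  have hext : Set.extremePoints ℝ {x ∈ polyG A | ∀ y ∈ polyG A, ℓ y ≤ ℓ x} ⊆
      Set.range fun e : (B : Set (V × V)) => rho e := by
    intro x hx
    obtain ⟨e, he, rfl⟩ := extremePoints_convexHull_subset
      (hfacet.1.isExtreme.extremePoints_subset_extremePoints hx)
    have hmax := (extremePoints_subset hx).2
    refine ⟨⟨e, Finset.mem_filter.2 ⟨he, ?_⟩⟩, rfl⟩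
    rw [← map_rho]
    exact le_antisymm (hx₀.2 _ (extremePoints_subset hx).1) (hmax x₀ hx₀.1)
  exact ((linearIndepOn_rho f (pos_of_isFacetOf_polyG hsym hx₀ hfacet) hB
    fun h => hcyc (h.mono (Finset.filter_subset _ _))).affineIndependent.range).mono hext

end Simplicial

namespace PreCycle

variable {V : Type*} (C : PreCycle V)

def downArrow (j : Fin C.l) : V × V :=
  if Even (j : ℕ) then (C.v (C.nxt j), C.v j) else (C.v j, C.v (C.nxt j))

lemma downArrow_injective (hl : 3 ≤ C.l) : Function.Injective C.downArrow := by
  have hsym : ∀ j, s((C.downArrow j).1, (C.downArrow j).2) = s(C.v j, C.v (C.nxt j)) :=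
      fun j => by
    unfold downArrow
    split_ifs
    exacts [Sym2.eq_swap, rfl]
  exact fun a b h => C.eq_of_sym2_eq hl (by rw [← hsym, ← hsym, h])

variable [DecidableEq V]

def evenVertices : Finset V := (Finset.univ.filter fun j : Fin C.l => Even (j : ℕ)).image C.v

lemma evenVertices_nonempty : C.evenVertices.Nonempty :=
  ⟨C.v ⟨0, C.pos⟩, Finset.mem_image_of_mem _ (by simp)⟩

lemma v_mem_evenVertices_iff {j : Fin C.l} : C.v j ∈ C.evenVertices ↔ Even (j : ℕ) := by
  simp [evenVertices, C.inj.eq_iff]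

lemma neg_one_pow_smul_rho_downArrow (j : Fin C.l) :
    (-1 : ℝ) ^ (j : ℕ) • rho (C.downArrow j) = rho (C.v (C.nxt j), C.v j) := by
  by_cases hj : Even (j : ℕ)
  · simp [downArrow, hj, hj.neg_one_pow]
  · rw [Nat.not_even_iff_odd] at hj
    simp [downArrow, hj.neg_one_pow, Nat.not_even_iff_odd.2 hj, ← rho_swap]

lemma sum_rho_nxt_eq_zero : ∑ j, rho (C.v (C.nxt j), C.v j) = 0 := by
  simp_rw [rho_eq_single_sub_single, Finset.sum_sub_distrib,
    C.nxt_injective.bijective_of_finite.sum_comp fun j => (Pi.single (C.v j) 1 : V → ℝ),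
    sub_self]

variable {C} {G : SimpleGraph V}

lemma distToFinset_evenVertices (hG : G.Connected) (hC : ∀ j, G.Adj (C.v j) (C.v (C.nxt j)))
    (heven : Even C.l) (j : Fin C.l) :
    G.distToFinset C.evenVertices_nonempty (C.v j) = if Even (j : ℕ) then 0 else 1 := by
  split_ifs with hj
  · exact (hG.distToFinset_eq_zero_iff).2 (C.v_mem_evenVertices_iff.2 hj)
  have hle := G.distToFinset_le C.evenVertices_nonempty (C.v j)
    (C.v_mem_evenVertices_iff.2 ((C.even_nxt_iff heven j).2 hj))
  rw [SimpleGraph.dist_eq_one_iff_adj.2 (hC j)] at hle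
  have hne := (hG.distToFinset_eq_zero_iff (hS := C.evenVertices_nonempty)).not.2
    (C.v_mem_evenVertices_iff.not.2 hj)
  omega

end PreCycle

section EvenCycle

variable {V : Type*} [DecidableEq V] {A : Finset (V × V)} {C : PreCycle V}

def tightArrows (A : Finset (V × V)) (δ : V → ℕ) : Finset (V × V) :=
  A.filter fun e => δ e.2 + 1 = δ e.1

lemma downArrow_mem_tightArrows (hsym : ∀ i j, (i, j) ∈ A → (j, i) ∈ A)
    (hconn : (arrowGraph A).Connected) (hC : ∀ j, (arrowGraph A).Adj (C.v j) (C.v (C.nxt j)))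
    (heven : Even C.l) (j : Fin C.l) :
    C.downArrow j ∈ tightArrows A ((arrowGraph A).distToFinset C.evenVertices_nonempty) := by
  have hδ := PreCycle.distToFinset_evenVertices hconn hC heven
  have hnxt := C.even_nxt_iff heven j
  unfold PreCycle.downArrow
  by_cases hj : Even (j : ℕ)
  · simp only [hj, if_true]
    exact Finset.mem_filter.2 ⟨mem_of_adj_arrowGraph hsym (hC j).symm, by simp [hδ, hj, hnxt]⟩
  · simp only [hj, if_false]
    exact Finset.mem_filter.2 ⟨mem_of_adj_arrowGraph hsym (hC j), by simp [hδ, hj, hnxt]⟩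

lemma connected_arrowGraph_tightArrows (hsym : ∀ i j, (i, j) ∈ A → (j, i) ∈ A)
    (hconn : (arrowGraph A).Connected) (hC : ∀ j, (arrowGraph A).Adj (C.v j) (C.v (C.nxt j)))
    (heven : Even C.l) :
    (arrowGraph (tightArrows A
      ((arrowGraph A).distToFinset C.evenVertices_nonempty))).Connected := by
  set T := tightArrows A ((arrowGraph A).distToFinset C.evenVertices_nonempty)
  have hcycle : ∀ j, (arrowGraph T).Adj (C.v j) (C.v (C.nxt j)) := fun j =>
    ⟨(hC j).ne, by
      have h := downArrow_mem_tightArrows hsym hconn hC heven j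
      unfold PreCycle.downArrow at h
      split_ifs at h
      exacts [Or.inr h, Or.inl h]⟩
  have hreach : ∀ i, ∃ j, (arrowGraph T).Reachable i (C.v j) := fun i => by
    obtain ⟨s, hs, hi⟩ := hconn.exists_mem_reachable_of_descent (hS := C.evenVertices_nonempty)
      (H := arrowGraph T) (fun a b hab hδ =>
        ⟨hab.ne, Or.inl (Finset.mem_filter.2 ⟨mem_of_adj_arrowGraph hsym hab, hδ⟩)⟩) i
    obtain ⟨j, -, rfl⟩ := Finset.mem_image.1 hs
    exact ⟨j, hi⟩
  refine (SimpleGraph.connected_iff _).2 ⟨fun x y => ?_, hconn.nonempty⟩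
  obtain ⟨j, hx⟩ := hreach x
  obtain ⟨k, hy⟩ := hreach y
  exact hx.trans ((C.reachable_of_adj hcycle j k).trans hy.symm)

variable [Fintype V]

lemma isFacetOf_distToFinset_evenVertices (hsym : ∀ i j, (i, j) ∈ A → (j, i) ∈ A)
    (hconn : (arrowGraph A).Connected) (hC : ∀ j, (arrowGraph A).Adj (C.v j) (C.v (C.nxt j)))
    (heven : Even C.l) :
    IsFacetOf {x ∈ polyG A | potentialFunctional (fun i =>
      ((arrowGraph A).distToFinset C.evenVertices_nonempty i : ℝ)) x = 1} (polyG A) := by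
  refine isFacetOf_polyG_of_tight hsym _ (fun e he => ?_) (Finset.filter_subset _ _)
    (fun e he => ?_) (connected_arrowGraph_tightArrows hsym hconn hC heven)
    ⟨_, downArrow_mem_tightArrows hsym hconn hC heven ⟨0, C.pos⟩⟩
  · rw [potentialFunctional_rho]
    by_cases h : e.1 = e.2
    · simp [h]
    · rw [sub_le_iff_le_add']
      exact_mod_cast hconn.distToFinset_le_add_one (show (arrowGraph A).Adj e.1 e.2 from
        ⟨h, Or.inl he⟩)
  · rw [potentialFunctional_rho, ← (Finset.mem_filter.1 he).2]
    push_cast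
    ring

theorem not_simplicial_polyG_of_hasEvenCycle (hsym : ∀ i j, (i, j) ∈ A → (j, i) ∈ A)
    (hconn : (arrowGraph A).Connected) (hcyc : HasEvenCycle A) : ¬Simplicial (polyG A) := by
  obtain ⟨C, hl, heven, hCA⟩ := hcyc
  have hC : ∀ j, (arrowGraph A).Adj (C.v j) (C.v (C.nxt j)) :=
    fun j => ⟨fun h => C.nxt_ne j (C.inj h).symm, hCA j⟩
  have hfacet := isFacetOf_distToFinset_evenVertices hsym hconn hC heven
  have hT := downArrow_mem_tightArrows hsym hconn hC heven
  have hne : ∀ j, (C.downArrow j).1 ≠ (C.downArrow j).2 := fun j h => by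
    have := (Finset.mem_filter.1 (hT j)).2
    rw [h] at this
    omega
  have hext : ∀ j, rho (C.downArrow j) ∈ Set.extremePoints ℝ _ := fun j => by
    have hA := (Finset.mem_filter.1 (hT j)).1
    rw [hfacet.1.isExtreme.extremePoints_eq]
    refine ⟨⟨rho_mem_polyG hA, ?_⟩, rho_mem_extremePoints_polyG hA (hne j)⟩
    rw [potentialFunctional_rho, ← (Finset.mem_filter.1 (hT j)).2]
    push_cast
    ring
  intro hsimp
  have hAI := (hsimp _ hfacet).comp_embedding ⟨fun j => ⟨_, hext j⟩, fun a b h =>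
    C.downArrow_injective hl (rho_injOn (hne a) (hne b) (congrArg Subtype.val h))⟩
  have hw : ∑ j : Fin C.l, (-1 : ℝ) ^ (j : ℕ) = 0 := by
    rw [Fin.sum_univ_eq_sum_range (fun k => (-1 : ℝ) ^ k), geom_sum_eq (by norm_num),
      heven.neg_one_pow]
    norm_num
  have h0 := affineIndependent_iff.1 hAI Finset.univ (fun j => (-1 : ℝ) ^ (j : ℕ)) hw
    (by
      change ∑ j : Fin C.l, (-1 : ℝ) ^ (j : ℕ) • rho (C.downArrow j) = 0
      simpa only [C.neg_one_pow_smul_rho_downArrow] using C.sum_rho_nxt_eq_zero)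
    ⟨0, C.pos⟩ (Finset.mem_univ _)
  simp at h0

end EvenCycle

/-- for a connected symmetric directed graph `G`, the polytope `P_G` is
simplicial iff the underlying undirected graph of `G` contains no even cycle. -/
theorem stmt14 {d : ℕ} (A : Finset (Fin d × Fin d)) (hconn : GConnected A)
    (hsym : ∀ i j : Fin d, (i, j) ∈ A → (j, i) ∈ A) :
    Simplicial (polyG A) ↔ ¬ HasEvenCycle A :=
  ⟨fun hs hcyc => not_simplicial_polyG_of_hasEvenCycle hsym hconn hcyc hs,
    simplicial_polyG_of_not_hasEvenCycle hsym⟩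
end

section
/- Let G be the symmetric directed graph that is an odd cycle on 2k+1 vertices (arrows (1,2),(2,1),...,(2k,2k+1),(2k+1,2k),(2k+1,1),(1,2k+1)). Then P_G is unimodularly equivalent to the del Pezzo polytope conv{±e_1,...,±e_{2k}, ±(e_1+...+e_{2k})} ⊂ ℝ^{2k}. -/
open Finset

/-- The symmetric directed cycle on `m` vertices: arrows `(i, i+1)` and `(i+1, i)`
for all `i`, cyclically. -/
def symCyc (m : ℕ) [NeZero m] : Finset (Fin m × Fin m) :=
  (Finset.univ.image fun i : Fin m => (i, i + 1)) ∪
    (Finset.univ.image fun i : Fin m => (i + 1, i))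

/-- The vertex set of the del Pezzo polytope `conv{±e_1, …, ±e_n, ±(e_1 + ⋯ + e_n)}`. -/
def delPezzoVerts (n : ℕ) : Set (Fin n → ℝ) :=
  {x | (∃ i, x = Pi.single i (1 : ℝ)) ∨ (∃ i, x = Pi.single i (-1 : ℝ)) ∨
    x = (fun _ => 1) ∨ x = (fun _ => -1)}

/-- The vertex set of the pseudo del Pezzo polytope
`conv{±e_1, …, ±e_n, e_1 + ⋯ + e_n}`. -/
def pseudoDelPezzoVerts (n : ℕ) : Set (Fin n → ℝ) :=
  {x | (∃ i, x = Pi.single i (1 : ℝ)) ∨ (∃ i, x = Pi.single i (-1 : ℝ)) ∨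
    x = (fun _ => 1)}

namespace St15

/-- extend a function on `Fin n` by zero -/
def ext (n : ℕ) (x : Fin n → ℝ) : ℕ → ℝ := fun m => if h : m < n then x ⟨m, h⟩ else 0

def Tfun (k : ℕ) (x : Fin (2*k+1) → ℝ) : Fin (2*k) → ℝ :=
  fun j => ∑ m ∈ Finset.range ((j:ℕ)+1), ext (2*k+1) x m

def T (k : ℕ) : (Fin (2*k+1) → ℝ) →ₗ[ℝ] (Fin (2*k) → ℝ) where
  toFun := Tfun k
  map_add' x y := by
    funext j
    show Tfun k (x + y) j = Tfun k x j + Tfun k y j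
    unfold Tfun
    rw [← Finset.sum_add_distrib]
    refine Finset.sum_congr rfl fun m _ => ?_
    unfold ext; split <;> simp
  map_smul' c x := by
    funext j
    show Tfun k (c • x) j = c * Tfun k x j
    unfold Tfun
    rw [Finset.mul_sum]
    refine Finset.sum_congr rfl fun m _ => ?_
    unfold ext; split <;> simp

lemma ext_rho (n : ℕ) (a b : Fin n) (m : ℕ) :
    ext n (rho (a, b)) m = (if m = (a:ℕ) then 1 else 0) - (if m = (b:ℕ) then 1 else 0) := by
  unfold ext rho
  split
  · simp [Fin.ext_iff]
  · have ha := a.isLt; have hb := b.isLt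
    rw [if_neg (by omega), if_neg (by omega)]; ring

lemma sum_indicator (c j : ℕ) :
    ∑ m ∈ Finset.range (j+1), (if m = c then (1:ℝ) else 0) = if c ≤ j then 1 else 0 := by
  simp [Finset.sum_ite_eq', Finset.mem_range, Nat.lt_succ_iff]

lemma T_rho (k : ℕ) (a b : Fin (2*k+1)) (j : Fin (2*k)) :
    T k (rho (a, b)) j = (if (a:ℕ) ≤ (j:ℕ) then 1 else 0) - (if (b:ℕ) ≤ (j:ℕ) then 1 else 0) := by
  show Tfun k (rho (a, b)) j = _
  unfold Tfun
  simp only [ext_rho, Finset.sum_sub_distrib, sum_indicator]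


lemma val_succ {k : ℕ} (i : Fin (2*k+1)) (h : (i:ℕ) < 2*k) :
    ((i + 1 : Fin (2*k+1)) : ℕ) = (i:ℕ) + 1 := by
  rw [Fin.val_add_one, if_neg]
  intro he
  rw [he] at h
  simp [Fin.val_last] at h

lemma val_succ_last {k : ℕ} (i : Fin (2*k+1)) (h : (i:ℕ) = 2*k) :
    ((i + 1 : Fin (2*k+1)) : ℕ) = 0 := by
  have : i = Fin.last (2*k) := Fin.ext (by simpa using h)
  rw [this, Fin.last_add_one, Fin.val_zero]

lemma T_rho_fwd (k : ℕ) (i : Fin (2*k+1)) (h : (i:ℕ) < 2*k) :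
    T k (rho (i, i+1)) = Pi.single (⟨(i:ℕ), h⟩ : Fin (2*k)) (1:ℝ) := by
  funext j
  rw [T_rho, val_succ i h, Pi.single_apply]
  simp only [Fin.ext_iff]
  split_ifs <;> first | (exfalso; omega) | norm_num

lemma T_rho_fwd_last (k : ℕ) (i : Fin (2*k+1)) (h : (i:ℕ) = 2*k) :
    T k (rho (i, i+1)) = fun _ => (-1 : ℝ) := by
  funext j
  rw [T_rho, val_succ_last i h, h]
  have := j.isLt
  rw [if_neg (by omega), if_pos (by omega)]
  ring

lemma rho_swap {V : Type*} [DecidableEq V] (a b : V) : rho (b, a) = -rho (a, b) := by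
  funext x; unfold rho; simp only [Pi.neg_apply]; ring

lemma T_rho_bwd (k : ℕ) (i : Fin (2*k+1)) (h : (i:ℕ) < 2*k) :
    T k (rho (i+1, i)) = Pi.single (⟨(i:ℕ), h⟩ : Fin (2*k)) (-1:ℝ) := by
  rw [rho_swap, map_neg, T_rho_fwd k i h]
  funext j
  rw [Pi.neg_apply, Pi.single_apply, Pi.single_apply]
  split_ifs <;> ring

lemma T_rho_bwd_last (k : ℕ) (i : Fin (2*k+1)) (h : (i:ℕ) = 2*k) :
    T k (rho (i+1, i)) = fun _ => (1 : ℝ) := by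
  rw [rho_swap, map_neg, T_rho_fwd_last k i h]
  funext j
  simp


lemma mem_symCyc {m : ℕ} [NeZero m] {e : Fin m × Fin m} :
    e ∈ symCyc m ↔ ∃ i, e = (i, i + 1) ∨ e = (i + 1, i) := by
  simp only [symCyc, Finset.mem_union, Finset.mem_image, Finset.mem_univ, true_and]
  constructor
  · rintro (⟨i, hi⟩ | ⟨i, hi⟩)
    · exact ⟨i, Or.inl hi.symm⟩
    · exact ⟨i, Or.inr hi.symm⟩
  · rintro ⟨i, hi | hi⟩
    · exact Or.inl ⟨i, hi.symm⟩
    · exact Or.inr ⟨i, hi.symm⟩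

lemma image_verts (k : ℕ) :
    T k '' (rho '' ((symCyc (2*k+1) : Finset _) : Set (Fin (2*k+1) × Fin (2*k+1)))) =
      delPezzoVerts (2*k) := by
  ext y
  constructor
  · rintro ⟨-, ⟨e, he, rfl⟩, rfl⟩
    rw [Finset.mem_coe, mem_symCyc] at he
    obtain ⟨i, rfl | rfl⟩ := he
    · rcases lt_or_eq_of_le (Nat.lt_succ_iff.mp i.isLt) with h | h
      · exact Or.inl ⟨⟨(i:ℕ), h⟩, T_rho_fwd k i h⟩
      · exact Or.inr (Or.inr (Or.inr (T_rho_fwd_last k i h)))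
    · rcases lt_or_eq_of_le (Nat.lt_succ_iff.mp i.isLt) with h | h
      · exact Or.inr (Or.inl ⟨⟨(i:ℕ), h⟩, T_rho_bwd k i h⟩)
      · exact Or.inr (Or.inr (Or.inl (T_rho_bwd_last k i h)))
  · have harr : ∀ i : Fin (2*k+1), (i, i+1) ∈ symCyc (2*k+1) ∧ (i+1, i) ∈ symCyc (2*k+1) :=
      fun i => ⟨mem_symCyc.mpr ⟨i, Or.inl rfl⟩, mem_symCyc.mpr ⟨i, Or.inr rfl⟩⟩
    rintro (⟨j, rfl⟩ | ⟨j, rfl⟩ | rfl | rfl)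
    · have hj : (j:ℕ) < 2*k := j.isLt
      refine ⟨rho ((⟨(j:ℕ), by omega⟩ : Fin (2*k+1)), ⟨(j:ℕ), by omega⟩ + 1),
        ⟨_, (harr _).1, rfl⟩, ?_⟩
      rw [T_rho_fwd k _ hj]
    · have hj : (j:ℕ) < 2*k := j.isLt
      refine ⟨rho ((⟨(j:ℕ), by omega⟩ : Fin (2*k+1)) + 1, ⟨(j:ℕ), by omega⟩),
        ⟨_, (harr _).2, rfl⟩, ?_⟩
      rw [T_rho_bwd k _ hj]
    · refine ⟨rho ((⟨2*k, by omega⟩ : Fin (2*k+1)) + 1, ⟨2*k, by omega⟩),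
        ⟨_, (harr _).2, rfl⟩, ?_⟩
      rw [T_rho_bwd_last k _ rfl]
    · refine ⟨rho ((⟨2*k, by omega⟩ : Fin (2*k+1)), ⟨2*k, by omega⟩ + 1),
        ⟨_, (harr _).1, rfl⟩, ?_⟩
      rw [T_rho_fwd_last k _ rfl]


/-- candidate inverse of `T k` -/
def Sfun (k : ℕ) (y : Fin (2*k) → ℝ) : Fin (2*k+1) → ℝ :=
  fun i => ext (2*k) y (i:ℕ) - (if (i:ℕ) = 0 then 0 else ext (2*k) y ((i:ℕ) - 1))

lemma telescope (g : ℕ → ℝ) (j : ℕ) :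
    ∑ n ∈ Finset.range (j+1), (g n - (if n = 0 then 0 else g (n - 1))) = g j := by
  induction j with
  | zero => simp
  | succ j ih =>
    rw [Finset.sum_range_succ, ih, if_neg (Nat.succ_ne_zero j)]
    simp

lemma ext_Sfun (k : ℕ) (y : Fin (2*k) → ℝ) (n : ℕ) :
    ext (2*k+1) (Sfun k y) n = ext (2*k) y n - (if n = 0 then 0 else ext (2*k) y (n - 1)) := by
  unfold ext Sfun
  split
  · rfl
  · next h =>
    rw [dif_neg (by omega), if_neg (by omega), dif_neg (by omega)]
    ring

lemma sum_ext (n : ℕ) (x : Fin n → ℝ) : ∑ m ∈ Finset.range n, ext n x m = ∑ i, x i := by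
  rw [← Fin.sum_univ_eq_sum_range]
  exact Finset.sum_congr rfl fun i _ => by simp [ext, i.isLt]

lemma T_Sfun (k : ℕ) (y : Fin (2*k) → ℝ) : T k (Sfun k y) = y := by
  funext j
  show Tfun k (Sfun k y) j = y j
  unfold Tfun
  simp only [ext_Sfun]
  rw [telescope]
  simp [ext, j.isLt]

lemma Sfun_T (k : ℕ) (hk : 1 ≤ k) (x : Fin (2*k+1) → ℝ) (hx : ∑ i, x i = 0) :
    Sfun k (T k x) = x := by
  have hTsum : ∀ n : ℕ, n < 2*k → ext (2*k) (T k x) n = ∑ m ∈ Finset.range (n+1), ext (2*k+1) x m := by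
    intro n hn
    simp only [ext, dif_pos hn]
    rfl
  have hsum0 : ∑ m ∈ Finset.range (2*k+1), ext (2*k+1) x m = 0 := by
    rw [sum_ext]; exact hx
  funext i
  unfold Sfun
  rcases Nat.lt_trichotomy (i:ℕ) (2*k) with hi | hi | hi
  · rcases Nat.eq_zero_or_pos (i:ℕ) with h0 | h0
    · rw [h0, if_pos rfl, hTsum 0 (by omega), sub_zero, Finset.sum_range_one]
      simp only [ext, dif_pos (by omega : (0:ℕ) < 2*k+1)]
      congr 1
      exact (Fin.ext h0.symm)
    · rw [if_neg (by omega), hTsum _ hi, hTsum _ (by omega)]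
      have : (i:ℕ) = ((i:ℕ) - 1) + 1 := by omega
      rw [show (i:ℕ) + 1 = (((i:ℕ) - 1) + 1) + 1 by omega, Finset.sum_range_succ]
      rw [show ((i:ℕ) - 1) + 1 = (i:ℕ) by omega]
      simp only [add_sub_cancel_left, ext, dif_pos i.isLt, Fin.eta]
  · have h0 : (i:ℕ) ≠ 0 := by omega
    rw [if_neg h0]
    have he : ext (2*k) (T k x) (i:ℕ) = 0 := by simp [ext, hi]
    rw [he, hTsum _ (by omega), zero_sub]
    have : ∑ m ∈ Finset.range (2*k+1), ext (2*k+1) x m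
        = (∑ m ∈ Finset.range (2*k), ext (2*k+1) x m) + ext (2*k+1) x (2*k) :=
      Finset.sum_range_succ _ _
    rw [hsum0] at this
    have h2 : ((i:ℕ) - 1) + 1 = 2*k := by omega
    rw [h2]
    have h3 : ext (2*k+1) x (2*k) = x i := by
      simp only [ext, dif_pos (by omega : 2*k < 2*k+1)]
      congr 1
      exact Fin.ext (by simpa using hi.symm)
    rw [h3] at this
    linarith
  · exact absurd i.isLt (by omega)

lemma mapsTo_T (k : ℕ) : Set.MapsTo (T k) (latticeSet (Fin (2*k+1))) (intLat (Fin (2*k))) := by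
  rintro x ⟨hint, -⟩ j
  choose F hF using hint
  refine ⟨∑ m ∈ Finset.range ((j:ℕ)+1), (if h : m < 2*k+1 then F ⟨m, h⟩ else 0), ?_⟩
  show Tfun k x j = _
  unfold Tfun
  push_cast
  refine Finset.sum_congr rfl fun m _ => ?_
  unfold ext
  split
  · rw [hF]
  · simp

lemma mapsTo_Sfun (k : ℕ) : Set.MapsTo (Sfun k) (intLat (Fin (2*k))) (latticeSet (Fin (2*k+1))) := by
  intro y hy
  choose F hF using hy
  constructor
  · intro i
    refine ⟨(if h : (i:ℕ) < 2*k then F ⟨(i:ℕ), h⟩ else 0)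
      - (if (i:ℕ) = 0 then 0 else if h : (i:ℕ) - 1 < 2*k then F ⟨(i:ℕ) - 1, h⟩ else 0), ?_⟩
    unfold Sfun ext
    push_cast
    congr 1
    · split
      · rw [hF]
      · simp
    · split
      · simp
      · split
        · rw [hF]
        · simp
  · have : ∑ i, Sfun k y i = ∑ m ∈ Finset.range (2*k+1), ext (2*k+1) (Sfun k y) m :=
      (sum_ext _ _).symm
    rw [this]
    simp only [ext_Sfun]
    rw [telescope]
    simp [ext]

lemma bijOn_T (k : ℕ) (hk : 1 ≤ k) :
    Set.BijOn (T k) (latticeSet (Fin (2*k+1))) (intLat (Fin (2*k))) := by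
  refine Set.InvOn.bijOn ⟨?_, ?_⟩ (mapsTo_T k) (mapsTo_Sfun k)
  · intro x hx
    exact Sfun_T k hk x hx.2
  · intro y _
    exact T_Sfun k y

end St15

/-- for the symmetric directed odd cycle `G` on `2k+1` vertices, `P_G` is
unimodularly equivalent to the del Pezzo polytope of dimension `2k`: there is a linear
map carrying the lattice `ℤ^{2k+1} ∩ {Σ xᵢ = 0}` bijectively onto `ℤ^{2k}` and carrying
`P_G` onto `conv{±e_1, …, ±e_{2k}, ±(e_1 + ⋯ + e_{2k})}`. -/
theorem stmt15 (k : ℕ) (hk : 1 ≤ k) :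
    ∃ T : (Fin (2 * k + 1) → ℝ) →ₗ[ℝ] (Fin (2 * k) → ℝ),
      Set.BijOn T (latticeSet (Fin (2 * k + 1))) (intLat (Fin (2 * k))) ∧
      T '' polyG (symCyc (2 * k + 1)) = convexHull ℝ (delPezzoVerts (2 * k)) := by
  refine ⟨St15.T k, St15.bijOn_T k hk, ?_⟩
  rw [polyG, (St15.T k).image_convexHull, St15.image_verts]
end
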